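/- arXiv:1209.1123 — 2 statements merged into one kernel-verified Lean document; each statement's English description precedes it below -/
import Mathlib

section
/- (Corollary 2: block-decoupled version of the main result.) Let (M, N, M̃, Ñ, X, Y, X̃, Ỹ) be an input/output decoupled DCF of the strictly proper plant G ∈ F^{m×p} over Ω, and let the block sparsity subspace S defined by K^bin : Fin ru → Fin ry → Bool be QI under G. (Sufficiency) If Q ∈ 𝔸^{p×m} is stable and satisfies wp(X̃_Q) ≤ K^bin or wp(X_Q) ≤ K^bin, then K_Q ∈ S and K_Q stabilizes G. (Necessity) If K ∈ S stabilizes G, then there exists a stable Q ∈ 𝔸^{p×m} with K = K_Q, wp(X̃_Q) ≤ K^bin, and wp(X_Q) ≤ K^bin. -/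
open Matrix

noncomputable section

/-- The field of real rational functions. -/
abbrev F : Type := RatFunc ℝ

/-- A rational function is stable (w.r.t. stability region `Ω`) if it is proper and
every complex root of the complexification of its reduced denominator lies in `Ω`. -/
def StableF (Ω : Set ℂ) (f : F) : Prop :=
  f.intDegree ≤ 0 ∧ ∀ z : ℂ, (f.denom.map (algebraMap ℝ ℂ)).IsRoot z → z ∈ Ω

/-- A matrix over `F` is stable if all its entries are stable. -/
def MatStable (Ω : Set ℂ) {a b : Type} (M : Matrix a b F) : Prop :=
  ∀ i j, StableF Ω (M i j)

/-- A matrix over `F` is strictly proper if every entry is `0` or has negative `intDegree`. -/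
def StrictlyProper {a b : Type} (G : Matrix a b F) : Prop :=
  ∀ i j, G i j = 0 ∨ (G i j).intDegree < 0

/-- A matrix over `F` is proper if every entry has nonpositive `intDegree`. -/
def ProperM {a b : Type} (K : Matrix a b F) : Prop :=
  ∀ i j, (K i j).intDegree ≤ 0

/-- `K` stabilizes `G` if `I + G*K` is invertible and the four closed-loop
transfer matrices are stable. -/
def Stabilizes (Ω : Set ℂ) {m p : ℕ} (G : Matrix (Fin m) (Fin p) F)
    (K : Matrix (Fin p) (Fin m) F) : Prop :=
  IsUnit (1 + G * K).det ∧
    MatStable Ω (1 + G * K)⁻¹ ∧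
    MatStable Ω ((1 + G * K)⁻¹ * G) ∧
    MatStable Ω (K * (1 + G * K)⁻¹) ∧
    MatStable Ω (1 + K * G)⁻¹

/-- A doubly coprime factorization of `G` over `Ω`. -/
structure IsDCF (Ω : Set ℂ) {m p : ℕ} (G : Matrix (Fin m) (Fin p) F)
    (M : Matrix (Fin p) (Fin p) F) (N : Matrix (Fin m) (Fin p) F)
    (Mt : Matrix (Fin m) (Fin m) F) (Nt : Matrix (Fin m) (Fin p) F)
    (X : Matrix (Fin p) (Fin m) F) (Y : Matrix (Fin p) (Fin p) F)
    (Xt : Matrix (Fin p) (Fin m) F) (Yt : Matrix (Fin m) (Fin m) F) : Prop where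
  stM : MatStable Ω M
  stN : MatStable Ω N
  stMt : MatStable Ω Mt
  stNt : MatStable Ω Nt
  stX : MatStable Ω X
  stY : MatStable Ω Y
  stXt : MatStable Ω Xt
  stYt : MatStable Ω Yt
  hM : IsUnit M.det
  hMt : IsUnit Mt.det
  hLeft : G = Mt⁻¹ * Nt
  hRight : G = N * M⁻¹
  bezout : Matrix.fromBlocks Y X (-Nt) Mt * Matrix.fromBlocks M (-Xt) N Yt = 1

/-- A left coprime factorization of `G` over `Ω`. -/
def IsLCF (Ω : Set ℂ) {m p : ℕ} (G : Matrix (Fin m) (Fin p) F)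
    (Mt : Matrix (Fin m) (Fin m) F) (Nt : Matrix (Fin m) (Fin p) F) : Prop :=
  MatStable Ω Mt ∧ MatStable Ω Nt ∧ IsUnit Mt.det ∧ G = Mt⁻¹ * Nt ∧
    ∃ Xt : Matrix (Fin p) (Fin m) F, ∃ Yt : Matrix (Fin m) (Fin m) F,
      MatStable Ω Xt ∧ MatStable Ω Yt ∧ Nt * Xt + Mt * Yt = 1

/-- A right coprime factorization of `G` over `Ω`. -/
def IsRCF (Ω : Set ℂ) {m p : ℕ} (G : Matrix (Fin m) (Fin p) F)
    (N : Matrix (Fin m) (Fin p) F) (M : Matrix (Fin p) (Fin p) F) : Prop :=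
  MatStable Ω N ∧ MatStable Ω M ∧ IsUnit M.det ∧ G = N * M⁻¹ ∧
    ∃ X : Matrix (Fin p) (Fin m) F, ∃ Y : Matrix (Fin p) (Fin p) F,
      MatStable Ω X ∧ MatStable Ω Y ∧ Y * M + X * N = 1

/-- Evaluation of a rational function at a complex point (complexified num/denom). -/
def evalC (z : ℂ) (f : F) : ℂ :=
  (f.num.map (algebraMap ℝ ℂ)).eval z / (f.denom.map (algebraMap ℝ ℂ)).eval z

/-!
For a stable `Q`, the factors `X_Q, Y_Q, X̃_Q, Ỹ_Q` again satisfy the Bézout identity (it is the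
old one multiplied by unipotent block matrices), so `K_Q` is the central controller `Y_Q⁻¹ X_Q`
of another doubly coprime factorization; for a central controller the closed-loop maps are
products of the stable factors, e.g. `(I + G K_Q)⁻¹ = Ỹ_Q M̃` and
`K_Q (I + G K_Q)⁻¹ = M X_Q = X̃_Q M̃`.
Conversely a stabilizing `K` equals `K_Q` for the stable `Q = (Y K - X)(I + G K)⁻¹(Ỹ + G X̃)`.

Quadratic invariance gives `K ∈ S ↔ K (I + G K)⁻¹ ∈ S`: polarizing `K G K ∈ S` yields
`T (G T)ᵏ ∈ S` for `T ∈ S`, hence `T p(G T) ∈ S` for every polynomial `p`, and the inverse of a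
matrix lies in the algebra generated by it. Multiplying by the block-diagonal `M`, `M̃` and their
inverses preserves `S`, which moves membership between `M X_Q = X̃_Q M̃`, `X_Q` and `X̃_Q`.
-/

open Polynomial

namespace Matrix

section Field

variable {𝕜 : Type*} [Field 𝕜] {n : Type*} [Fintype n] [DecidableEq n]

theorem inv_mem_subalgebra (S : Subalgebra 𝕜 (Matrix n n 𝕜)) {A : Matrix n n 𝕜} (hA : A ∈ S) :
    A⁻¹ ∈ S := by
  by_cases hdet : IsUnit A.det
  · -- `x ↦ A * x` is injective on the finite-dimensional `S`, hence onto
    have hinj : Function.Injective (LinearMap.mulLeft 𝕜 (⟨A, hA⟩ : S)) := fun x y hxy =>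
      Subtype.ext <| by
        simpa [nonsing_inv_mul_cancel_left _ _ hdet] using congrArg (A⁻¹ * ·.val) hxy
    obtain ⟨B, hB⟩ := LinearMap.injective_iff_surjective.mp hinj 1
    rw [inv_eq_right_inv (congrArg Subtype.val hB)]
    exact B.2
  · rw [nonsing_inv_apply_not_isUnit _ hdet]
    exact S.zero_mem

end Field

section CommRing

variable {R : Type*} [CommRing R] {m p : Type*} [Fintype m] [Fintype p] [DecidableEq m]

theorem det_one_add_sub_one_mem (I : Ideal R) {A : Matrix m m R} (hA : ∀ i j, A i j ∈ I) :
    (1 + A).det - 1 ∈ I := by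
  have hA0 : (Ideal.Quotient.mk I).mapMatrix A = 0 := by
    ext i j
    exact Ideal.Quotient.eq_zero_iff_mem.mpr (hA i j)
  rw [← Ideal.Quotient.eq, RingHom.map_det, map_add, map_one, hA0, add_zero, det_one, map_one]

variable {G : Matrix m p R} {K : Matrix p m R}

theorem one_sub_mul_mul_inv_one_add (hGK : IsUnit (1 + G * K).det) :
    1 - G * (K * (1 + G * K)⁻¹) = (1 + G * K)⁻¹ := by
  have h := mul_nonsing_inv _ hGK
  rw [Matrix.add_mul, Matrix.one_mul] at h
  rw [sub_eq_iff_eq_add, ← Matrix.mul_assoc, h]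

theorem eq_mul_inv_one_add_mul_inv_one_sub (hGK : IsUnit (1 + G * K).det) :
    K = K * (1 + G * K)⁻¹ * (1 - G * (K * (1 + G * K)⁻¹))⁻¹ := by
  rw [one_sub_mul_mul_inv_one_add hGK, nonsing_inv_nonsing_inv _ hGK, Matrix.mul_assoc,
    nonsing_inv_mul _ hGK, Matrix.mul_one]

theorem mul_inv_one_add_comm [DecidableEq p] (hGK : IsUnit (1 + G * K).det) :
    K * (1 + G * K)⁻¹ = (1 + K * G)⁻¹ * K := by
  have hKG : IsUnit (1 + K * G).det := by rwa [det_one_add_mul_comm]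
  have hpush : (1 + K * G) * K = K * (1 + G * K) := by
    simp only [Matrix.add_mul, Matrix.mul_add, Matrix.one_mul, Matrix.mul_one, Matrix.mul_assoc]
  calc K * (1 + G * K)⁻¹ = (1 + K * G)⁻¹ * ((1 + K * G) * K) * (1 + G * K)⁻¹ := by
        rw [nonsing_inv_mul_cancel_left _ _ hKG]
    _ = (1 + K * G)⁻¹ * K := by
        rw [hpush, Matrix.mul_assoc, Matrix.mul_assoc, mul_nonsing_inv _ hGK, Matrix.mul_one]

theorem mul_inv_one_add_mul [DecidableEq p] (hGK : IsUnit (1 + G * K).det) :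
    K * (1 + G * K)⁻¹ * G = 1 - (1 + K * G)⁻¹ := by
  have hKG : IsUnit (1 + K * G).det := by rwa [det_one_add_mul_comm]
  have h := nonsing_inv_mul _ hKG
  rw [Matrix.mul_add, Matrix.mul_one] at h
  rw [mul_inv_one_add_comm hGK, Matrix.mul_assoc, eq_sub_iff_add_eq, add_comm]
  exact h

end CommRing

section BlockStructure

variable (R : Type*) [CommSemiring R] {ι κ α β : Type*}

def blockDiagonalSubalgebra [Fintype ι] [DecidableEq ι] (ρ : ι → α) :
    Subalgebra R (Matrix ι ι R) where
  carrier := {A | ∀ i j, ρ i ≠ ρ j → A i j = 0}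
  mul_mem' {A B} hA hB i j hij := Finset.sum_eq_zero fun k _ => show A i k * B k j = 0 by
    by_cases hik : ρ i = ρ k
    · rw [hB k j (hik ▸ hij), mul_zero]
    · rw [hA i k hik, zero_mul]
  add_mem' hA hB i j hij := by rw [add_apply, hA i j hij, hB i j hij, add_zero]
  algebraMap_mem' r i j hij := by
    rw [algebraMap_matrix_apply, if_neg (ne_of_apply_ne ρ hij)]

def blockSparsity (ρu : ι → α) (ρy : κ → β) (Kbin : α → β → Bool) :
    Submodule R (Matrix ι κ R) where
  carrier := {K | ∀ i j, Kbin (ρu i) (ρy j) = false → K i j = 0}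
  add_mem' hA hB i j hij := by rw [add_apply, hA i j hij, hB i j hij, add_zero]
  zero_mem' _ _ _ := rfl
  smul_mem' c K hK i j hij := by rw [smul_apply, hK i j hij, smul_zero]

variable {R} {ρu : ι → α} {ρy : κ → β} {Kbin : α → β → Bool}

theorem mul_mem_blockSparsity_of_mem_blockDiagonal [Fintype ι] [DecidableEq ι]
    {D : Matrix ι ι R} (hD : D ∈ blockDiagonalSubalgebra R ρu) {K : Matrix ι κ R}
    (hK : K ∈ blockSparsity R ρu ρy Kbin) : D * K ∈ blockSparsity R ρu ρy Kbin :=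
  fun i j hij => Finset.sum_eq_zero fun k _ => show D i k * K k j = 0 by
    by_cases hik : ρu i = ρu k
    · rw [hK k j (hik ▸ hij), mul_zero]
    · rw [hD i k hik, zero_mul]

theorem mul_blockDiagonal_mem_blockSparsity [Fintype κ] [DecidableEq κ] {K : Matrix ι κ R}
    (hK : K ∈ blockSparsity R ρu ρy Kbin) {D : Matrix κ κ R}
    (hD : D ∈ blockDiagonalSubalgebra R ρy) : K * D ∈ blockSparsity R ρu ρy Kbin :=
  fun i j hij => Finset.sum_eq_zero fun k _ => show K i k * D k j = 0 by
    by_cases hkj : ρy k = ρy j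
    · rw [hK i k (hkj ▸ hij), zero_mul]
    · rw [hD k j hkj, mul_zero]

end BlockStructure

end Matrix

section QuadraticInvariance

variable {𝕜 : Type*} [Field 𝕜] {ι κ : Type*} [Fintype ι] [Fintype κ] [DecidableEq κ]

def IsQuadraticallyInvariant (S : Submodule 𝕜 (Matrix ι κ 𝕜)) (G : Matrix κ ι 𝕜) : Prop :=
  ∀ K ∈ S, K * G * K ∈ S

namespace IsQuadraticallyInvariant

variable {S : Submodule 𝕜 (Matrix ι κ 𝕜)} {G : Matrix κ ι 𝕜} {T : Matrix ι κ 𝕜}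

theorem mul_pow_mem [NeZero (2 : 𝕜)] (hS : IsQuadraticallyInvariant S G) (hT : T ∈ S)
    (k : ℕ) : T * (G * T) ^ k ∈ S := by
  induction k with
  | zero => simpa using hT
  | succ k ih =>
    set L := T * (G * T) ^ k
    have hTGL : T * G * L = T * (G * T) ^ (k + 1) := by
      simp only [L, pow_succ', Matrix.mul_assoc]
    have hLGT : L * G * T = T * (G * T) ^ (k + 1) := by
      simp only [L, pow_succ, Matrix.mul_assoc]
    -- polarization: `T G L` and `L G T` are both `T (G T)ᵏ⁺¹`
    have hpolar : (2 : 𝕜) • (T * (G * T) ^ (k + 1)) =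
        (T + L) * G * (T + L) - T * G * T - L * G * L := by
      rw [two_smul]
      nth_rw 1 [← hTGL]
      rw [← hLGT]
      simp only [Matrix.add_mul, Matrix.mul_add]
      abel
    rw [← S.smul_mem_iff (two_ne_zero : (2 : 𝕜) ≠ 0), hpolar]
    exact S.sub_mem (S.sub_mem (hS _ (S.add_mem hT ih)) (hS T hT)) (hS L ih)

theorem mul_aeval_mem [NeZero (2 : 𝕜)] (hS : IsQuadraticallyInvariant S G) (hT : T ∈ S)
    (s : 𝕜[X]) : T * aeval (G * T) s ∈ S := by
  rw [aeval_eq_sum_range, Matrix.mul_sum]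
  exact S.sum_mem fun k _ => by
    rw [Matrix.mul_smul]
    exact S.smul_mem _ (hS.mul_pow_mem hT k)

theorem mul_inv_aeval_mem [NeZero (2 : 𝕜)] (hS : IsQuadraticallyInvariant S G) (hT : T ∈ S)
    (q : 𝕜[X]) : T * (aeval (G * T) q)⁻¹ ∈ S := by
  obtain ⟨s, hs⟩ : (aeval (G * T) q)⁻¹ ∈ (aeval (G * T)).range := by
    rw [← Algebra.adjoin_singleton_eq_range_aeval 𝕜]
    exact Matrix.inv_mem_subalgebra _ (aeval_mem_adjoin_singleton 𝕜 _)
  rw [← hs]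
  exact hS.mul_aeval_mem hT s

theorem mul_inv_one_add_mem_iff [DecidableEq ι] [NeZero (2 : 𝕜)]
    (hS : IsQuadraticallyInvariant S G) {K : Matrix ι κ 𝕜} (hGK : IsUnit (1 + G * K).det) :
    K * (1 + G * K)⁻¹ ∈ S ↔ K ∈ S := by
  constructor
  · intro hT
    have h := hS.mul_inv_aeval_mem hT (1 - X)
    rwa [map_sub, map_one, aeval_X, ← Matrix.eq_mul_inv_one_add_mul_inv_one_sub hGK] at h
  · intro hK
    have h := hS.mul_inv_aeval_mem hK (1 + X)
    rwa [map_add, map_one, aeval_X] at h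

end IsQuadraticallyInvariant

end QuadraticInvariance

namespace RatFunc

variable {K : Type*} [Field K] {f g : RatFunc K}

theorem intDegree_add_nonpos (hf : f.intDegree ≤ 0) (hg : g.intDegree ≤ 0) :
    (f + g).intDegree ≤ 0 := by
  rcases eq_or_ne (f + g) 0 with h | h
  · rw [h, intDegree_zero]
  rcases eq_or_ne g 0 with rfl | hg0
  · simpa using hf
  exact (intDegree_add_le hg0 h).trans (max_le hf hg)

theorem intDegree_mul_nonpos (hf : f.intDegree ≤ 0) (hg : g.intDegree ≤ 0) :
    (f * g).intDegree ≤ 0 := by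
  rcases eq_or_ne f 0 with rfl | hf0
  · rw [zero_mul, intDegree_zero]
  rcases eq_or_ne g 0 with rfl | hg0
  · rw [mul_zero, intDegree_zero]
  rw [intDegree_mul hf0 hg0]
  omega

def IsStrictlyProper (f : RatFunc K) : Prop :=
  f = 0 ∨ f.intDegree < 0

theorem IsStrictlyProper.intDegree_nonpos (hf : f.IsStrictlyProper) : f.intDegree ≤ 0 := by
  rcases hf with rfl | hf
  · rw [intDegree_zero]
  · exact hf.le

theorem IsStrictlyProper.add (hf : f.IsStrictlyProper) (hg : g.IsStrictlyProper) :
    (f + g).IsStrictlyProper := by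
  rcases hg with rfl | hg
  · rwa [add_zero]
  rcases hf with rfl | hf
  · rw [zero_add]; exact Or.inr hg
  rcases eq_or_ne (f + g) 0 with h | h
  · exact Or.inl h
  have hg0 : g ≠ 0 := by rintro rfl; rw [intDegree_zero] at hg; omega
  exact Or.inr ((intDegree_add_le hg0 h).trans_lt (max_lt hf hg))

theorem IsStrictlyProper.mul_of_intDegree_nonpos (hf : f.IsStrictlyProper)
    (hg : g.intDegree ≤ 0) : (f * g).IsStrictlyProper := by
  rcases hf with rfl | hf
  · exact Or.inl (zero_mul g)
  rcases eq_or_ne g 0 with rfl | hg0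
  · exact Or.inl (mul_zero f)
  have hf0 : f ≠ 0 := by rintro rfl; rw [intDegree_zero] at hf; omega
  rw [IsStrictlyProper, intDegree_mul hf0 hg0]
  omega

theorem IsStrictlyProper.neg (hf : f.IsStrictlyProper) : (-f).IsStrictlyProper := by
  rwa [IsStrictlyProper, neg_eq_zero, intDegree_neg]

variable (K) in
def properSubring : Subring (RatFunc K) where
  carrier := {f | f.intDegree ≤ 0}
  zero_mem' := intDegree_zero.le
  one_mem' := intDegree_one.le
  add_mem' := intDegree_add_nonpos
  mul_mem' := intDegree_mul_nonpos
  neg_mem' {f} hf := (intDegree_neg f).trans_le hf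

variable (K) in
def strictlyProperIdeal : Ideal (properSubring K) where
  carrier := {f | (f : RatFunc K).IsStrictlyProper}
  zero_mem' := Or.inl rfl
  add_mem' := IsStrictlyProper.add
  smul_mem' c f hf := by
    change ((c : RatFunc K) * f).IsStrictlyProper
    rw [mul_comm]
    exact IsStrictlyProper.mul_of_intDegree_nonpos hf c.2

theorem one_notMem_strictlyProperIdeal : 1 ∉ strictlyProperIdeal K := by
  rintro (h | h)
  · exact one_ne_zero h
  · rw [OneMemClass.coe_one, intDegree_one] at h
    exact lt_irrefl 0 h

theorem denom_neg_dvd (f : RatFunc K) : (-f).denom ∣ f.denom :=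
  (denom_dvd f.denom_ne_zero).mpr ⟨-f.num, by rw [map_neg, neg_div, num_div_denom]⟩

end RatFunc

open RatFunc

theorem MatStable.properM {Ω : Set ℂ} {a b : Type} {A : Matrix a b F} (hA : MatStable Ω A) :
    ProperM A :=
  fun i j => (hA i j).1

section StrictlyProper

variable {a b c : Type}

theorem StrictlyProper.mul_properM [Fintype b] {A : Matrix a b F} {B : Matrix b c F}
    (hA : StrictlyProper A) (hB : ProperM B) : StrictlyProper (A * B) := fun i j =>
  Finset.sum_induction _ IsStrictlyProper (fun _ _ => IsStrictlyProper.add) (Or.inl rfl)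
    fun k _ => IsStrictlyProper.mul_of_intDegree_nonpos (hA i k) (hB k j)

theorem ProperM.mul_strictlyProper [Fintype b] {A : Matrix a b F} {B : Matrix b c F}
    (hA : ProperM A) (hB : StrictlyProper B) : StrictlyProper (A * B) := fun i j =>
  Finset.sum_induction _ IsStrictlyProper (fun _ _ => IsStrictlyProper.add) (Or.inl rfl)
    fun k _ => mul_comm (B k j) (A i k) ▸
      IsStrictlyProper.mul_of_intDegree_nonpos (hB k j) (hA i k)

theorem StrictlyProper.neg {A : Matrix a b F} (hA : StrictlyProper A) : StrictlyProper (-A) :=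
  fun i j => IsStrictlyProper.neg (hA i j)

theorem StrictlyProper.isUnit_det_one_add [Fintype b] [DecidableEq b] {A : Matrix b b F}
    (hA : StrictlyProper A) : IsUnit (1 + A).det := by
  -- modulo the ideal of strictly proper functions in the ring of proper ones, `1 + A ≡ 1`
  let A' : Matrix b b (properSubring ℝ) :=
    Matrix.of fun i j => ⟨A i j, IsStrictlyProper.intDegree_nonpos (hA i j)⟩
  have hA' : (properSubring ℝ).subtype.mapMatrix (1 + A') = 1 + A := by
    ext i j
    rw [RingHom.mapMatrix_apply, Matrix.map_apply, Matrix.add_apply, Matrix.add_apply,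
      Matrix.one_apply, Matrix.one_apply]
    split_ifs <;> simp [A']
  rw [isUnit_iff_ne_zero, ← hA', ← RingHom.map_det, Subring.coe_subtype, ne_eq,
    ZeroMemClass.coe_eq_zero]
  intro h0
  have h := Matrix.det_one_add_sub_one_mem (strictlyProperIdeal ℝ) (A := A') hA
  rw [h0, zero_sub, neg_mem_iff] at h
  exact one_notMem_strictlyProperIdeal h

end StrictlyProper

section Stability

variable {Ω : Set ℂ}

theorem StableF.of_denom_dvd {f g h : F} (hf : StableF Ω f) (hg : StableF Ω g)
    (hd : h.denom ∣ f.denom * g.denom) (hdeg : h.intDegree ≤ 0) : StableF Ω h := by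
  refine ⟨hdeg, fun z hz => ?_⟩
  have hroot := hz.dvd (Polynomial.map_dvd (algebraMap ℝ ℂ) hd)
  rw [Polynomial.map_mul, Polynomial.IsRoot, Polynomial.eval_mul, mul_eq_zero] at hroot
  exact hroot.elim (hf.2 z) (hg.2 z)

variable (Ω) in
def stableSubring : Subring F where
  carrier := {f | StableF Ω f}
  zero_mem' := ⟨intDegree_zero.le, fun z hz => by simp at hz⟩
  one_mem' := ⟨intDegree_one.le, fun z hz => by simp at hz⟩
  add_mem' hf hg := hf.of_denom_dvd hg (denom_add_dvd _ _) (intDegree_add_nonpos hf.1 hg.1)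
  mul_mem' hf hg := hf.of_denom_dvd hg (denom_mul_dvd _ _) (intDegree_mul_nonpos hf.1 hg.1)
  neg_mem' {f} hf := hf.of_denom_dvd hf ((denom_neg_dvd f).trans (dvd_mul_right _ _))
    ((intDegree_neg f).trans_le hf.1)

variable {a b c : Type} {A B : Matrix a b F}

theorem MatStable.add (hA : MatStable Ω A) (hB : MatStable Ω B) : MatStable Ω (A + B) :=
  fun i j => (stableSubring Ω).add_mem (hA i j) (hB i j)

theorem MatStable.sub (hA : MatStable Ω A) (hB : MatStable Ω B) : MatStable Ω (A - B) :=
  fun i j => (stableSubring Ω).sub_mem (hA i j) (hB i j)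

theorem MatStable.mul [Fintype b] {C : Matrix b c F} (hA : MatStable Ω A) (hC : MatStable Ω C) :
    MatStable Ω (A * C) :=
  fun i j => (stableSubring Ω).sum_mem fun k _ => (stableSubring Ω).mul_mem (hA i k) (hC k j)

theorem MatStable.one [DecidableEq a] : MatStable Ω (1 : Matrix a a F) := fun i j => by
  rw [Matrix.one_apply]
  split_ifs
  exacts [(stableSubring Ω).one_mem, (stableSubring Ω).zero_mem]

end Stability

section Bezout

variable {R : Type*} [CommRing R] {m p : Type*} [Fintype m] [Fintype p] [DecidableEq m]
  [DecidableEq p] {M : Matrix p p R} {N : Matrix m p R} {Mt : Matrix m m R} {Nt : Matrix m p R}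
  {X : Matrix p m R} {Y : Matrix p p R} {Xt : Matrix p m R} {Yt : Matrix m m R}

theorem bezout_youla (h : fromBlocks Y X (-Nt) Mt * fromBlocks M (-Xt) N Yt = 1)
    (Q : Matrix p m R) :
    fromBlocks (Y - Q * Nt) (X + Q * Mt) (-Nt) Mt *
      fromBlocks M (-(Xt + M * Q)) N (Yt - N * Q) = 1 := by
  have hleft : fromBlocks (Y - Q * Nt) (X + Q * Mt) (-Nt) Mt =
      fromBlocks 1 Q 0 1 * fromBlocks Y X (-Nt) Mt := by
    simp [fromBlocks_multiply, sub_eq_add_neg, add_comm]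
  have hright : fromBlocks M (-(Xt + M * Q)) N (Yt - N * Q) =
      fromBlocks M (-Xt) N Yt * fromBlocks 1 (-Q) 0 1 := by
    simp [fromBlocks_multiply, sub_eq_add_neg, add_comm]
  rw [hleft, hright, Matrix.mul_assoc, ← Matrix.mul_assoc (fromBlocks Y X _ _), h,
    Matrix.one_mul, fromBlocks_multiply]
  simp [fromBlocks_one]

theorem Y_mul_M_add_X_mul_N_of_bezout
    (h : fromBlocks Y X (-Nt) Mt * fromBlocks M (-Xt) N Yt = 1) : Y * M + X * N = 1 := by
  simpa [fromBlocks_multiply, ← fromBlocks_one] using congrArg toBlocks₁₁ h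

theorem Nt_mul_Xt_add_Mt_mul_Yt_of_bezout
    (h : fromBlocks Y X (-Nt) Mt * fromBlocks M (-Xt) N Yt = 1) : Nt * Xt + Mt * Yt = 1 := by
  simpa [fromBlocks_multiply, ← fromBlocks_one] using congrArg toBlocks₂₂ h

theorem Y_mul_Xt_of_bezout
    (h : fromBlocks Y X (-Nt) Mt * fromBlocks M (-Xt) N Yt = 1) : Y * Xt = X * Yt := by
  have h₁₂ := congrArg toBlocks₁₂ h
  simp only [fromBlocks_multiply, Matrix.mul_neg, Matrix.neg_mul, neg_neg, toBlocks_fromBlocks₁₂,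
    ← fromBlocks_one] at h₁₂
  exact neg_add_eq_zero.mp h₁₂

theorem M_mul_X_of_bezout
    (h : fromBlocks Y X (-Nt) Mt * fromBlocks M (-Xt) N Yt = 1) : M * X = Xt * Mt := by
  have h₁₂ := congrArg toBlocks₁₂ (mul_eq_one_comm.mp h)
  simp only [fromBlocks_multiply, Matrix.mul_neg, Matrix.neg_mul, neg_neg, toBlocks_fromBlocks₁₂,
    ← fromBlocks_one] at h₁₂
  exact add_neg_eq_zero.mp h₁₂

end Bezout

namespace IsDCF

variable {Ω : Set ℂ} {m p : ℕ} {G : Matrix (Fin m) (Fin p) F}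
  {M : Matrix (Fin p) (Fin p) F} {N : Matrix (Fin m) (Fin p) F}
  {Mt : Matrix (Fin m) (Fin m) F} {Nt : Matrix (Fin m) (Fin p) F}
  {X : Matrix (Fin p) (Fin m) F} {Y : Matrix (Fin p) (Fin p) F}
  {Xt : Matrix (Fin p) (Fin m) F} {Yt : Matrix (Fin m) (Fin m) F}

theorem youla (h : IsDCF Ω G M N Mt Nt X Y Xt Yt) {Q : Matrix (Fin p) (Fin m) F}
    (hQ : MatStable Ω Q) :
    IsDCF Ω G M N Mt Nt (X + Q * Mt) (Y - Q * Nt) (Xt + M * Q) (Yt - N * Q) :=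
  { h with
    stX := h.stX.add (hQ.mul h.stMt)
    stY := h.stY.sub (hQ.mul h.stNt)
    stXt := h.stXt.add (h.stM.mul hQ)
    stYt := h.stYt.sub (h.stN.mul hQ)
    bezout := bezout_youla h.bezout Q }

theorem N_eq (h : IsDCF Ω G M N Mt Nt X Y Xt Yt) : N = G * M := by
  rw [h.hRight, nonsing_inv_mul_cancel_right _ _ h.hM]

theorem Nt_eq (h : IsDCF Ω G M N Mt Nt X Y Xt Yt) : Nt = Mt * G := by
  rw [h.hLeft, mul_nonsing_inv_cancel_left _ _ h.hMt]

theorem Yt_add_G_mul_Xt_mul_Mt (h : IsDCF Ω G M N Mt Nt X Y Xt Yt) : (Yt + G * Xt) * Mt = 1 :=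
  mul_eq_one_comm.mp <| by
    rw [Matrix.mul_add, ← Matrix.mul_assoc, ← h.Nt_eq, add_comm]
    exact Nt_mul_Xt_add_Mt_mul_Yt_of_bezout h.bezout

theorem M_mul_Y_add_X_mul_G (h : IsDCF Ω G M N Mt Nt X Y Xt Yt) : M * (Y + X * G) = 1 :=
  mul_eq_one_comm.mp <| by
    rw [Matrix.add_mul, Matrix.mul_assoc, ← h.N_eq]
    exact Y_mul_M_add_X_mul_N_of_bezout h.bezout

theorem isUnit_det_Y (h : IsDCF Ω G M N Mt Nt X Y Xt Yt) (hG : StrictlyProper G) :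
    IsUnit Y.det := by
  have hYM : Y * M = 1 + -(X * N) := by
    rw [← sub_eq_add_neg, eq_sub_iff_add_eq]
    exact Y_mul_M_add_X_mul_N_of_bezout h.bezout
  have hXN : StrictlyProper (X * N) :=
    h.stX.properM.mul_strictlyProper (h.N_eq ▸ hG.mul_properM h.stM.properM)
  have hunit := hXN.neg.isUnit_det_one_add
  rw [← hYM, det_mul] at hunit
  exact isUnit_of_mul_isUnit_left hunit

theorem central_mul_Yt (h : IsDCF Ω G M N Mt Nt X Y Xt Yt) (hG : StrictlyProper G) :
    Y⁻¹ * X * Yt = Xt := by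
  rw [Matrix.mul_assoc, ← Y_mul_Xt_of_bezout h.bezout,
    nonsing_inv_mul_cancel_left _ _ (h.isUnit_det_Y hG)]

theorem one_add_mul_central_mul (h : IsDCF Ω G M N Mt Nt X Y Xt Yt) (hG : StrictlyProper G) :
    (1 + G * (Y⁻¹ * X)) * (Yt * Mt) = 1 := by
  rw [Matrix.add_mul, Matrix.one_mul, Matrix.mul_assoc, ← Matrix.mul_assoc _ Yt,
    h.central_mul_Yt hG, ← Matrix.mul_assoc, ← Matrix.add_mul]
  exact h.Yt_add_G_mul_Xt_mul_Mt

theorem inv_one_add_mul_central (h : IsDCF Ω G M N Mt Nt X Y Xt Yt) (hG : StrictlyProper G) :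
    (1 + G * (Y⁻¹ * X))⁻¹ = Yt * Mt :=
  inv_eq_right_inv (h.one_add_mul_central_mul hG)

theorem inv_one_add_central_mul (h : IsDCF Ω G M N Mt Nt X Y Xt Yt) (hG : StrictlyProper G) :
    (1 + Y⁻¹ * X * G)⁻¹ = M * Y := by
  refine inv_eq_left_inv ?_
  rw [Matrix.mul_add, Matrix.mul_one, Matrix.mul_assoc, ← Matrix.mul_assoc Y,
    ← Matrix.mul_assoc Y, mul_nonsing_inv _ (h.isUnit_det_Y hG), Matrix.one_mul, ← Matrix.mul_add]
  exact h.M_mul_Y_add_X_mul_G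

theorem central_mul_inv_one_add (h : IsDCF Ω G M N Mt Nt X Y Xt Yt) (hG : StrictlyProper G) :
    Y⁻¹ * X * (1 + G * (Y⁻¹ * X))⁻¹ = M * X := by
  rw [h.inv_one_add_mul_central hG, ← Matrix.mul_assoc, h.central_mul_Yt hG,
    M_mul_X_of_bezout h.bezout]

theorem stabilizes_central (h : IsDCF Ω G M N Mt Nt X Y Xt Yt) (hG : StrictlyProper G) :
    Stabilizes Ω G (Y⁻¹ * X) := by
  refine ⟨isUnit_det_of_right_inverse (h.one_add_mul_central_mul hG), ?_, ?_, ?_, ?_⟩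
  · rw [h.inv_one_add_mul_central hG]
    exact h.stYt.mul h.stMt
  · rw [h.inv_one_add_mul_central hG, Matrix.mul_assoc, ← h.Nt_eq]
    exact h.stYt.mul h.stNt
  · rw [h.central_mul_inv_one_add hG]
    exact h.stM.mul h.stX
  · rw [h.inv_one_add_central_mul hG]
    exact h.stM.mul h.stY

theorem exists_eq_youla_of_stabilizes (h : IsDCF Ω G M N Mt Nt X Y Xt Yt)
    (hG : StrictlyProper G) {K : Matrix (Fin p) (Fin m) F}
    (hK : Stabilizes Ω G K) :
    ∃ Q : Matrix (Fin p) (Fin m) F, MatStable Ω Q ∧ K = (Y - Q * Nt)⁻¹ * (X + Q * Mt) := by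
  obtain ⟨hGK, hSo, hSoG, hKSo, hSi⟩ := hK
  set Q := (Y * K - X) * (1 + G * K)⁻¹ * (Yt + G * Xt) with hQ
  have hQ_expand : Q = Y * (K * (1 + G * K)⁻¹) * Yt + Y * (K * (1 + G * K)⁻¹ * G) * Xt
      - X * (1 + G * K)⁻¹ * Yt - X * ((1 + G * K)⁻¹ * G) * Xt := by
    simp only [hQ, Matrix.sub_mul, Matrix.mul_add, Matrix.mul_assoc]
    abel
  have hKSoG : MatStable Ω (K * (1 + G * K)⁻¹ * G) := by
    rw [mul_inv_one_add_mul hGK]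
    exact MatStable.one.sub hSi
  have hQst : MatStable Ω Q := by
    rw [hQ_expand]
    exact ((((h.stY.mul hKSo).mul h.stYt).add ((h.stY.mul hKSoG).mul h.stXt)).sub
      ((h.stX.mul hSo).mul h.stYt)).sub ((h.stX.mul hSoG).mul h.stXt)
  refine ⟨Q, hQst, ?_⟩
  have hQMt : Q * Mt * (1 + G * K) = Y * K - X := by
    rw [hQ, Matrix.mul_assoc _ (Yt + G * Xt), h.Yt_add_G_mul_Xt_mul_Mt, Matrix.mul_one,
      nonsing_inv_mul_cancel_right _ _ hGK]
  have hQK : (Y - Q * Nt) * K = X + Q * Mt := by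
    rw [Matrix.mul_add, Matrix.mul_one] at hQMt
    have hQNtK : Q * Nt * K = Y * K - X - Q * Mt := by
      rw [← hQMt, h.Nt_eq]
      simp only [Matrix.mul_assoc]
      abel
    rw [Matrix.sub_mul, hQNtK]
    abel
  rw [← hQK, nonsing_inv_mul_cancel_left _ _ ((h.youla hQst).isUnit_det_Y hG)]

end IsDCF

/-- **Corollary 2 (block-decoupled version of the main result).** For an input/output decoupled
DCF of the strictly proper plant `G` (`M` is `ρu`-block-diagonal, `M̃` is `ρy`-block-diagonal)
and a QI block sparsity subspace `S` given by `Kbin`: if `Q` is stable and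
`wp(X̃_Q) ≤ K^bin` or `wp(X_Q) ≤ K^bin` then `K_Q ∈ S` stabilizes `G`; conversely every
stabilizing controller in `S` is `K_Q` for some stable `Q` satisfying both inequalities. -/
theorem decoupled_main_result (Ω : Set ℂ) (m p ru ry : ℕ)
    (ρu : Fin p → Fin ru) (ρy : Fin m → Fin ry)
    (G : Matrix (Fin m) (Fin p) F) (hG : StrictlyProper G)
    (M : Matrix (Fin p) (Fin p) F) (N : Matrix (Fin m) (Fin p) F)
    (Mt : Matrix (Fin m) (Fin m) F) (Nt : Matrix (Fin m) (Fin p) F)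
    (X : Matrix (Fin p) (Fin m) F) (Y : Matrix (Fin p) (Fin p) F)
    (Xt : Matrix (Fin p) (Fin m) F) (Yt : Matrix (Fin m) (Fin m) F)
    (hDCF : IsDCF Ω G M N Mt Nt X Y Xt Yt)
    (hMdiag : ∀ i j, ρu i ≠ ρu j → M i j = 0)
    (hMtdiag : ∀ i j, ρy i ≠ ρy j → Mt i j = 0)
    (Kbin : Fin ru → Fin ry → Bool)
    (hQI : ∀ K : Matrix (Fin p) (Fin m) F,
      (∀ i j, Kbin (ρu i) (ρy j) = false → K i j = 0) →
      (∀ i j, Kbin (ρu i) (ρy j) = false → (K * G * K) i j = 0)) :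
    (∀ Q : Matrix (Fin p) (Fin m) F, MatStable Ω Q →
      ((∀ i j, Kbin (ρu i) (ρy j) = false → (Xt + M * Q) i j = 0) ∨
       (∀ i j, Kbin (ρu i) (ρy j) = false → (X + Q * Mt) i j = 0)) →
      (∀ i j, Kbin (ρu i) (ρy j) = false →
        ((Y - Q * Nt)⁻¹ * (X + Q * Mt)) i j = 0) ∧
      Stabilizes Ω G ((Y - Q * Nt)⁻¹ * (X + Q * Mt))) ∧
    (∀ K : Matrix (Fin p) (Fin m) F,
      (∀ i j, Kbin (ρu i) (ρy j) = false → K i j = 0) → Stabilizes Ω G K →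
      ∃ Q : Matrix (Fin p) (Fin m) F, MatStable Ω Q ∧
        K = (Y - Q * Nt)⁻¹ * (X + Q * Mt) ∧
        (∀ i j, Kbin (ρu i) (ρy j) = false → (Xt + M * Q) i j = 0) ∧
        (∀ i j, Kbin (ρu i) (ρy j) = false → (X + Q * Mt) i j = 0)) := by
  have hS : IsQuadraticallyInvariant (blockSparsity F ρu ρy Kbin) G := hQI
  have hM : M ∈ blockDiagonalSubalgebra F ρu := hMdiag
  have hMt : Mt ∈ blockDiagonalSubalgebra F ρy := hMtdiag
  refine ⟨fun Q hQ hwp => ?_, fun K hK hKstab => ?_⟩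
  · have hQ' := hDCF.youla hQ
    have hstab := hQ'.stabilizes_central hG
    refine ⟨?_, hstab⟩
    show _ ∈ blockSparsity F ρu ρy Kbin
    rw [← hS.mul_inv_one_add_mem_iff hstab.1, hQ'.central_mul_inv_one_add hG]
    rcases hwp with hXt | hX
    · rw [M_mul_X_of_bezout hQ'.bezout]
      exact mul_blockDiagonal_mem_blockSparsity hXt hMt
    · exact mul_mem_blockSparsity_of_mem_blockDiagonal hM hX
  · obtain ⟨Q, hQ, rfl⟩ := hDCF.exists_eq_youla_of_stabilizes hG hKstab
    have hQ' := hDCF.youla hQ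
    have hT := (hS.mul_inv_one_add_mem_iff hKstab.1).mpr hK
    rw [hQ'.central_mul_inv_one_add hG] at hT
    refine ⟨Q, hQ, rfl, ?_, ?_⟩
    · show _ ∈ blockSparsity F ρu ρy Kbin
      rw [← mul_nonsing_inv_cancel_right _ (Xt + M * Q) hDCF.hMt,
        ← M_mul_X_of_bezout hQ'.bezout]
      exact mul_blockDiagonal_mem_blockSparsity hT (inv_mem_subalgebra _ hMt)
    · show _ ∈ blockSparsity F ρu ρy Kbin
      rw [← nonsing_inv_mul_cancel_left _ (X + Q * Mt) hDCF.hM]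
      exact mul_mem_blockSparsity_of_mem_blockDiagonal (inv_mem_subalgebra _ hM) hT
end
end

section
/- (Proposition 2, part 2: the rank test is independent of the choice of row factorizations.) Let G ∈ F^{m×p} be strictly proper with output partition ρy : Fin m → Fin ry, and let {(M̃ᵢ, Ñᵢ)} and {(M̃ᵢ', Ñᵢ')} be two families of left coprime factorizations over Ω of the block rows of G (as in Proposition 2, part 1), with ρy-block-diagonal concatenations (M̃, Ñ) and (M̃', Ñ') and associated matrices Ψ = [M̃ Ñ], Ψ' = [M̃' Ñ']. Then for every λ₀ ∈ ℂ∖Ω, the complex matrices Ψ(λ₀) and Ψ'(λ₀) have the same rank; in particular, rank Ψ(λ₀) = m holds for all unstable poles λ₀ of G if and only if rank Ψ'(λ₀) = m holds for all unstable poles λ₀ of G. -/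
open Matrix

noncomputable section

/-!
Two left coprime factorizations `(M̃ᵢ, Ñᵢ)`, `(M̃ᵢ', Ñᵢ')` of the same block row differ by a
left factor that is unimodular over the stable functions: `Uᵢ = Ñᵢ' X̃ᵢ + M̃ᵢ' Ỹᵢ` equals
`M̃ᵢ' M̃ᵢ⁻¹`, so `Uᵢ [M̃ᵢ Ñᵢ] = [M̃ᵢ' Ñᵢ']`, and `Vᵢ = Ñᵢ X̃ᵢ' + M̃ᵢ Ỹᵢ' = M̃ᵢ M̃ᵢ'⁻¹` is its
stable inverse. Since `M̃` and `M̃'` are block diagonal, the `Uᵢ` glue to a block-diagonal `U`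
with `Ψ' = U Ψ`. At `λ₀ ∉ Ω` every stable function is regular, evaluation at `λ₀` is a ring
homomorphism on regular functions, hence `U(λ₀)` is invertible and
`rank Ψ'(λ₀) = rank (U(λ₀) Ψ(λ₀)) = rank Ψ(λ₀)`.
-/

theorem Equiv.sigmaFiberEquiv_symm_apply_coe {α β : Type*} {f : α → β} {b : β}
    (a : {a // f a = b}) : (Equiv.sigmaFiberEquiv f).symm a = ⟨b, a⟩ :=
  (Equiv.sigmaFiberEquiv f).symm_apply_eq.mpr rfl

namespace Matrix

theorem mul_mem_matrix {l m n R σ : Type*} [Fintype m] [NonUnitalNonAssocSemiring R]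
    [SetLike σ R] [AddSubmonoidClass σ R] [MulMemClass σ R] {S : σ}
    {A : Matrix l m R} {B : Matrix m n R} (hA : A ∈ (S : Set R).matrix)
    (hB : B ∈ (S : Set R).matrix) : A * B ∈ (S : Set R).matrix :=
  fun i j => sum_mem fun k _ => mul_mem (hA i k) (hB k j)

theorem add_mem_matrix {m n R σ : Type*} [Add R] [SetLike σ R] [AddMemClass σ R] {S : σ}
    {A B : Matrix m n R} (hA : A ∈ (S : Set R).matrix) (hB : B ∈ (S : Set R).matrix) :
    A + B ∈ (S : Set R).matrix :=
  fun i j => add_mem (hA i j) (hB i j)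

theorem fromCols_mem_matrix {m n₁ n₂ R : Type*} {S : Set R} {A : Matrix m n₁ R}
    {B : Matrix m n₂ R} (hA : A ∈ S.matrix) (hB : B ∈ S.matrix) : fromCols A B ∈ S.matrix
  | i, .inl j => hA i j
  | i, .inr k => hB i k

theorem add_mul_eq_mul_nonsing_inv_of_nonsing_inv_mul_eq {R k q : Type*} [CommRing R]
    [Fintype k] [DecidableEq k] [Fintype q] {A A' : Matrix k k R} {B B' : Matrix k q R}
    {X : Matrix q k R} {Y : Matrix k k R} (hA : IsUnit A.det) (hA' : IsUnit A'.det)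
    (hAB : A⁻¹ * B = A'⁻¹ * B') (hXY : B * X + A * Y = 1) :
    B' * X + A' * Y = A' * A⁻¹ := by
  have hB' : B' = A' * A⁻¹ * B := by
    rw [Matrix.mul_assoc, hAB, mul_nonsing_inv_cancel_left _ _ hA']
  calc B' * X + A' * Y = A' * A⁻¹ * (B * X + A * Y) := by
        rw [hB', Matrix.mul_add, Matrix.mul_assoc _ B, Matrix.mul_assoc A',
          Matrix.mul_assoc A', nonsing_inv_mul_cancel_left _ _ hA]
    _ = A' * A⁻¹ := by rw [hXY, Matrix.mul_one]

def LeftAssociated {k c R : Type*} [Fintype k] [DecidableEq k] [Semiring R] (S : Set R)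
    (Ψ Ψ' : Matrix k c R) : Prop :=
  ∃ U V : Matrix k k R, U ∈ S.matrix ∧ V ∈ S.matrix ∧ U * V = 1 ∧ U * Ψ = Ψ'

section FiberBlockDiagonal

variable {α β R : Type*} [DecidableEq β] (ρ : α → β)

def fiberBlockDiagonal [Zero R] (U : ∀ i, Matrix {a // ρ a = i} {a // ρ a = i} R) :
    Matrix α α R :=
  (blockDiagonal' U).submatrix (Equiv.sigmaFiberEquiv ρ).symm (Equiv.sigmaFiberEquiv ρ).symm

variable {ρ}

theorem fiberBlockDiagonal_apply_coe [Zero R] (U : ∀ i, Matrix {a // ρ a = i} {a // ρ a = i} R)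
    {i : β} (a b : {a // ρ a = i}) : fiberBlockDiagonal ρ U a b = U i a b := by
  rw [fiberBlockDiagonal, submatrix_apply, Equiv.sigmaFiberEquiv_symm_apply_coe,
    Equiv.sigmaFiberEquiv_symm_apply_coe, blockDiagonal'_apply_eq]

theorem fiberBlockDiagonal_apply_of_ne [Zero R]
    (U : ∀ i, Matrix {a // ρ a = i} {a // ρ a = i} R) {a b : α} (h : ρ a ≠ ρ b) :
    fiberBlockDiagonal ρ U a b = 0 := by
  rw [fiberBlockDiagonal, submatrix_apply,
    Equiv.sigmaFiberEquiv_symm_apply_coe (⟨a, rfl⟩ : {x // ρ x = ρ a}),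
    Equiv.sigmaFiberEquiv_symm_apply_coe (⟨b, rfl⟩ : {x // ρ x = ρ b}),
    blockDiagonal'_apply_ne _ _ _ h]

theorem fiberBlockDiagonal_mem_matrix [Zero R] {S : Set R} (h0 : 0 ∈ S)
    {U : ∀ i, Matrix {a // ρ a = i} {a // ρ a = i} R} (hU : ∀ i, U i ∈ S.matrix) :
    fiberBlockDiagonal ρ U ∈ S.matrix := by
  intro a b
  by_cases h : ρ a = ρ b
  · exact fiberBlockDiagonal_apply_coe U ⟨a, rfl⟩ ⟨b, h.symm⟩ ▸ hU _ _ _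
  · exact fiberBlockDiagonal_apply_of_ne U h ▸ h0

theorem fiberBlockDiagonal_submatrix_coe [Zero R] {M : Matrix α α R}
    (hM : ∀ a b, ρ a ≠ ρ b → M a b = 0) :
    fiberBlockDiagonal ρ (fun _ => M.submatrix Subtype.val Subtype.val) = M := by
  ext a b
  by_cases h : ρ a = ρ b
  · exact fiberBlockDiagonal_apply_coe _ ⟨a, rfl⟩ ⟨b, h.symm⟩
  · rw [fiberBlockDiagonal_apply_of_ne _ h, hM a b h]

theorem fiberBlockDiagonal_one [Zero R] [One R] [Fintype α] [DecidableEq α] :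
    fiberBlockDiagonal ρ (1 : ∀ i, Matrix {a // ρ a = i} {a // ρ a = i} R) = 1 := by
  rw [fiberBlockDiagonal, blockDiagonal'_one, submatrix_one_equiv]

variable [Fintype α] [Fintype β]

theorem fiberBlockDiagonal_mul [NonUnitalNonAssocSemiring R]
    (U V : ∀ i, Matrix {a // ρ a = i} {a // ρ a = i} R) :
    fiberBlockDiagonal ρ U * fiberBlockDiagonal ρ V =
      fiberBlockDiagonal ρ (fun i => U i * V i) := by
  rw [fiberBlockDiagonal, fiberBlockDiagonal, submatrix_mul_equiv, ← blockDiagonal'_mul,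
    fiberBlockDiagonal]

theorem fiberBlockDiagonal_mul_apply [NonUnitalNonAssocSemiring R] {q : Type*}
    (U : ∀ i, Matrix {a // ρ a = i} {a // ρ a = i} R) (B : Matrix α q R) (a : α) (k : q) :
    (fiberBlockDiagonal ρ U * B) a k =
      (U (ρ a) * B.submatrix (Subtype.val : {x // ρ x = ρ a} → α) id) ⟨a, rfl⟩ k := by
  rw [mul_apply, ← (Equiv.sigmaFiberEquiv ρ).sum_comp, Fintype.sum_sigma,
    Fintype.sum_eq_single (ρ a), mul_apply]
  · exact Finset.sum_congr rfl fun b _ => by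
      rw [Equiv.sigmaFiberEquiv_apply, fiberBlockDiagonal_apply_coe U ⟨a, rfl⟩ b]; rfl
  · intro i hi
    exact Finset.sum_eq_zero fun b _ => by
      rw [Equiv.sigmaFiberEquiv_apply, fiberBlockDiagonal_apply_of_ne U (b.2.trans_ne hi).symm,
        zero_mul]

theorem leftAssociated_fromCols_of_fiberwise [DecidableEq α] [Semiring R] {q : Type*}
    {S : Set R} (h0 : 0 ∈ S) {A A' : Matrix α α R} {B B' : Matrix α q R}
    (hA : ∀ a b, ρ a ≠ ρ b → A a b = 0) (hA' : ∀ a b, ρ a ≠ ρ b → A' a b = 0)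
    (h : ∀ i, let ι : {a // ρ a = i} → α := Subtype.val
      LeftAssociated S (fromCols (A.submatrix ι ι) (B.submatrix ι id))
        (fromCols (A'.submatrix ι ι) (B'.submatrix ι id))) :
    LeftAssociated S (fromCols A B) (fromCols A' B') := by
  choose U V hU hV hUV hUΨ using h
  simp only [mul_fromCols, fromCols_ext_iff] at hUΨ
  refine ⟨fiberBlockDiagonal ρ U, fiberBlockDiagonal ρ V, fiberBlockDiagonal_mem_matrix h0 hU,
    fiberBlockDiagonal_mem_matrix h0 hV, ?_, ?_⟩
  · rw [fiberBlockDiagonal_mul, ← fiberBlockDiagonal_one (ρ := ρ) (R := R)]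
    exact congrArg (fiberBlockDiagonal ρ) (funext hUV)
  rw [mul_fromCols, fromCols_ext_iff]
  constructor
  · rw [← fiberBlockDiagonal_submatrix_coe hA, fiberBlockDiagonal_mul,
      ← fiberBlockDiagonal_submatrix_coe hA']
    exact congrArg (fiberBlockDiagonal ρ) (funext fun i => (hUΨ i).1)
  · ext a k
    rw [fiberBlockDiagonal_mul_apply, (hUΨ (ρ a)).2]
    rfl

end FiberBlockDiagonal

end Matrix


universe u

namespace RatFunc

variable {K L : Type u} [Field K] [Field L] (f : K →+* L) (a : L)

theorem eval₂_ne_zero_of_dvd_mul {p q r : Polynomial K} (h : r ∣ p * q)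
    (hp : p.eval₂ f a ≠ 0) (hq : q.eval₂ f a ≠ 0) : r.eval₂ f a ≠ 0 := fun hr =>
  mul_ne_zero hp hq <| by
    simpa [Polynomial.eval₂_mul] using Polynomial.eval₂_eq_zero_of_dvd_of_eval₂_eq_zero f a h hr

/-- `RatFunc.eval f a` is a ring homomorphism on this subring but not on all of `RatFunc K`,
since it returns the junk value `0` at a pole. -/
def regularAt : Subring (RatFunc K) :=
  Subsemiring.toSubring
    { carrier := {x | x.denom.eval₂ f a ≠ 0}
      mul_mem' := fun hx hy => eval₂_ne_zero_of_dvd_mul f a (denom_mul_dvd _ _) hx hy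
      add_mem' := fun hx hy => eval₂_ne_zero_of_dvd_mul f a (denom_add_dvd _ _) hx hy
      one_mem' := by simp
      zero_mem' := by simp }
    (by
      change (denom (-1 : RatFunc K)).eval₂ f a ≠ 0
      rw [show (-1 : RatFunc K) = C (-1) by rw [map_neg, map_one], denom_C]
      simp)

def evalRingHom : regularAt f a →+* L where
  toFun x := eval f a x
  map_one' := eval_one f a
  map_zero' := eval_zero f a
  map_mul' x y := eval_mul f a x.2 y.2
  map_add' x y := eval_add f a x.2 y.2

theorem map_eval_mul {l m n : Type*} [Fintype m] {A : Matrix l m (RatFunc K)}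
    {B : Matrix m n (RatFunc K)} (hA : A ∈ (regularAt f a : Set (RatFunc K)).matrix)
    (hB : B ∈ (regularAt f a : Set (RatFunc K)).matrix) :
    (A * B).map (eval f a) = A.map (eval f a) * B.map (eval f a) := by
  obtain ⟨A', rfl⟩ : ∃ A' : Matrix l m (regularAt f a), A'.map (regularAt f a).subtype = A :=
    ⟨.of fun i j => ⟨A i j, hA i j⟩, rfl⟩
  obtain ⟨B', rfl⟩ : ∃ B' : Matrix m n (regularAt f a), B'.map (regularAt f a).subtype = B :=
    ⟨.of fun i j => ⟨B i j, hB i j⟩, rfl⟩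
  rw [← Matrix.map_mul (f := (regularAt f a).subtype)]
  simp only [Matrix.map_map]
  exact Matrix.map_mul (f := evalRingHom f a)

end RatFunc

theorem Matrix.LeftAssociated.rank_map_eval_eq {K L : Type u} [Field K] [Field L] {f : K →+* L}
    {a : L} {n q : Type*} [Fintype n] [DecidableEq n] [Fintype q]
    {Ψ Ψ' : Matrix n q (RatFunc K)} (h : LeftAssociated (RatFunc.regularAt f a) Ψ Ψ')
    (hΨ : Ψ ∈ (RatFunc.regularAt f a : Set (RatFunc K)).matrix) :
    (Ψ'.map (RatFunc.eval f a)).rank = (Ψ.map (RatFunc.eval f a)).rank := by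
  obtain ⟨U, V, hU, hV, hUV, rfl⟩ := h
  have hUV' : U.map (RatFunc.eval f a) * V.map (RatFunc.eval f a) = 1 := by
    rw [← RatFunc.map_eval_mul f a hU hV, hUV,
      Matrix.map_one _ (RatFunc.eval_zero f a) (RatFunc.eval_one f a)]
  rw [RatFunc.map_eval_mul f a hU hΨ,
    Matrix.rank_mul_eq_right_of_isUnit_det _ _ (Matrix.isUnit_det_of_right_inverse hUV')]

theorem evalC_eq_eval (z : ℂ) : evalC z = RatFunc.eval (algebraMap ℝ ℂ) z := by
  ext x
  rw [evalC, RatFunc.eval, Polynomial.eval₂_eq_eval_map, Polynomial.eval₂_eq_eval_map]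

theorem StableF.mem_regularAt {Ω : Set ℂ} {z : ℂ} {x : F} (hx : StableF Ω x) (hz : z ∉ Ω) :
    x ∈ RatFunc.regularAt (algebraMap ℝ ℂ) z := fun h =>
  hz (hx.2 z (by rwa [Polynomial.IsRoot, ← Polynomial.eval₂_eq_eval_map]))

theorem MatStable.mem_matrix {Ω : Set ℂ} {S : Subring F} (hS : ∀ x, StableF Ω x → x ∈ S)
    {a b : Type} {M : Matrix a b F} (hM : MatStable Ω M) : M ∈ (S : Set F).matrix :=
  fun i j => hS _ (hM i j)

theorem leftAssociated_of_left_coprime {Ω : Set ℂ} {S : Subring F}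
    (hS : ∀ x, StableF Ω x → x ∈ S) {k q : Type} [Fintype k] [DecidableEq k] [Fintype q]
    {A A' : Matrix k k F} {B B' : Matrix k q F} (hA : MatStable Ω A) (hB : MatStable Ω B)
    (hA' : MatStable Ω A') (hB' : MatStable Ω B') (hAu : IsUnit A.det) (hA'u : IsUnit A'.det)
    (hAB : A⁻¹ * B = A'⁻¹ * B')
    (hbez : ∃ X : Matrix q k F, ∃ Y : Matrix k k F,
      MatStable Ω X ∧ MatStable Ω Y ∧ B * X + A * Y = 1)
    (hbez' : ∃ X : Matrix q k F, ∃ Y : Matrix k k F,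
      MatStable Ω X ∧ MatStable Ω Y ∧ B' * X + A' * Y = 1) :
    LeftAssociated (S : Set F) (fromCols A B) (fromCols A' B') := by
  obtain ⟨X, Y, hX, hY, hXY⟩ := hbez
  obtain ⟨X', Y', hX', hY', hXY'⟩ := hbez'
  have hU := add_mul_eq_mul_nonsing_inv_of_nonsing_inv_mul_eq hAu hA'u hAB hXY
  have hV := add_mul_eq_mul_nonsing_inv_of_nonsing_inv_mul_eq hA'u hAu hAB.symm hXY'
  refine ⟨B' * X + A' * Y, B * X' + A * Y',
    add_mem_matrix (mul_mem_matrix (hB'.mem_matrix hS) (hX.mem_matrix hS))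
      (mul_mem_matrix (hA'.mem_matrix hS) (hY.mem_matrix hS)),
    add_mem_matrix (mul_mem_matrix (hB.mem_matrix hS) (hX'.mem_matrix hS))
      (mul_mem_matrix (hA.mem_matrix hS) (hY'.mem_matrix hS)), ?_, ?_⟩
  · rw [hU, hV, Matrix.mul_assoc, nonsing_inv_mul_cancel_left _ _ hAu, mul_nonsing_inv _ hA'u]
  · rw [hU, mul_fromCols, nonsing_inv_mul_cancel_right _ _ hAu, Matrix.mul_assoc, hAB,
      mul_nonsing_inv_cancel_left _ _ hA'u]

theorem rank_test_independent_of_row_factorization_general (Ω : Set ℂ) (m p ry : ℕ)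
    (ρy : Fin m → Fin ry)
    (G : Matrix (Fin m) (Fin p) F)
    (Mt Mt' : Matrix (Fin m) (Fin m) F) (Nt Nt' : Matrix (Fin m) (Fin p) F)
    (hMtStable : MatStable Ω Mt) (hNtStable : MatStable Ω Nt)
    (hMtStable' : MatStable Ω Mt') (hNtStable' : MatStable Ω Nt')
    (hMtdiag : ∀ i j, ρy i ≠ ρy j → Mt i j = 0)
    (hMtdiag' : ∀ i j, ρy i ≠ ρy j → Mt' i j = 0)
    (hrow : ∀ i : Fin ry,
      IsUnit (Mt.submatrix (Subtype.val : {j // ρy j = i} → Fin m)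
        (Subtype.val : {j // ρy j = i} → Fin m)).det ∧
      G.submatrix (Subtype.val : {j // ρy j = i} → Fin m) id =
        (Mt.submatrix (Subtype.val : {j // ρy j = i} → Fin m)
          (Subtype.val : {j // ρy j = i} → Fin m))⁻¹ *
          Nt.submatrix (Subtype.val : {j // ρy j = i} → Fin m) id ∧
      ∃ Xti : Matrix (Fin p) {j // ρy j = i} F,
        ∃ Yti : Matrix {j // ρy j = i} {j // ρy j = i} F,
          MatStable Ω Xti ∧ MatStable Ω Yti ∧
          Nt.submatrix (Subtype.val : {j // ρy j = i} → Fin m) id * Xti +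
            Mt.submatrix (Subtype.val : {j // ρy j = i} → Fin m)
              (Subtype.val : {j // ρy j = i} → Fin m) * Yti = 1)
    (hrow' : ∀ i : Fin ry,
      IsUnit (Mt'.submatrix (Subtype.val : {j // ρy j = i} → Fin m)
        (Subtype.val : {j // ρy j = i} → Fin m)).det ∧
      G.submatrix (Subtype.val : {j // ρy j = i} → Fin m) id =
        (Mt'.submatrix (Subtype.val : {j // ρy j = i} → Fin m)
          (Subtype.val : {j // ρy j = i} → Fin m))⁻¹ *
          Nt'.submatrix (Subtype.val : {j // ρy j = i} → Fin m) id ∧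
      ∃ Xti : Matrix (Fin p) {j // ρy j = i} F,
        ∃ Yti : Matrix {j // ρy j = i} {j // ρy j = i} F,
          MatStable Ω Xti ∧ MatStable Ω Yti ∧
          Nt'.submatrix (Subtype.val : {j // ρy j = i} → Fin m) id * Xti +
            Mt'.submatrix (Subtype.val : {j // ρy j = i} → Fin m)
              (Subtype.val : {j // ρy j = i} → Fin m) * Yti = 1) :
    (∀ z₀ : ℂ, z₀ ∉ Ω →
      Matrix.rank (Matrix.of fun (i : Fin m) (jk : Fin m ⊕ Fin p) =>
        Sum.elim (fun j => evalC z₀ (Mt i j)) (fun k => evalC z₀ (Nt i k)) jk) =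
      Matrix.rank (Matrix.of fun (i : Fin m) (jk : Fin m ⊕ Fin p) =>
        Sum.elim (fun j => evalC z₀ (Mt' i j)) (fun k => evalC z₀ (Nt' i k)) jk)) ∧
    ((∀ z₀ : ℂ, z₀ ∉ Ω →
        (∃ a b, ((G a b).denom.map (algebraMap ℝ ℂ)).IsRoot z₀) →
        Matrix.rank (Matrix.of fun (i : Fin m) (jk : Fin m ⊕ Fin p) =>
          Sum.elim (fun j => evalC z₀ (Mt i j)) (fun k => evalC z₀ (Nt i k)) jk) = m) ↔
      (∀ z₀ : ℂ, z₀ ∉ Ω →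
        (∃ a b, ((G a b).denom.map (algebraMap ℝ ℂ)).IsRoot z₀) →
        Matrix.rank (Matrix.of fun (i : Fin m) (jk : Fin m ⊕ Fin p) =>
          Sum.elim (fun j => evalC z₀ (Mt' i j)) (fun k => evalC z₀ (Nt' i k)) jk) = m)) := by
  have hrank : ∀ z₀ : ℂ, z₀ ∉ Ω →
      rank (fromCols (Mt.map (evalC z₀)) (Nt.map (evalC z₀))) =
        rank (fromCols (Mt'.map (evalC z₀)) (Nt'.map (evalC z₀))) := by
    intro z₀ hz₀
    have hS (x : F) (hx : StableF Ω x) : x ∈ RatFunc.regularAt (algebraMap ℝ ℂ) z₀ :=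
      hx.mem_regularAt hz₀
    have hassoc : LeftAssociated (RatFunc.regularAt (algebraMap ℝ ℂ) z₀ : Set F)
        (fromCols Mt Nt) (fromCols Mt' Nt') :=
      leftAssociated_fromCols_of_fiberwise (zero_mem _) hMtdiag hMtdiag' fun i =>
        leftAssociated_of_left_coprime hS (fun a b => hMtStable a b) (fun a b => hNtStable a b)
          (fun a b => hMtStable' a b) (fun a b => hNtStable' a b) (hrow i).1 (hrow' i).1
          ((hrow i).2.1.symm.trans (hrow' i).2.1) (hrow i).2.2 (hrow' i).2.2
    rw [evalC_eq_eval, ← fromCols_map, ← fromCols_map]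
    exact (hassoc.rank_map_eval_eq
      (fromCols_mem_matrix (hMtStable.mem_matrix hS) (hNtStable.mem_matrix hS))).symm
  exact ⟨hrank, forall₂_congr fun z₀ hz₀ => imp_congr_right fun _ => (hrank z₀ hz₀).congr_left⟩

/-- **Proposition 2, part 2.** The rank test is independent of the choice of the row coprime
factorizations: if `(M̃, Ñ)` and `(M̃', Ñ')` are two block-diagonal concatenations of families
of left coprime factorizations of the block rows of `G`, then for every `z₀ ∈ ℂ∖Ω` the
matrices `Ψ(z₀) = [M̃(z₀) Ñ(z₀)]` and `Ψ'(z₀) = [M̃'(z₀) Ñ'(z₀)]` have the same rank; in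
particular the rank-`m` condition at the unstable poles of `G` holds for one family iff it
holds for the other. -/
theorem rank_test_independent_of_row_factorization (Ω : Set ℂ) (m p ry : ℕ)
    (ρy : Fin m → Fin ry)
    (G : Matrix (Fin m) (Fin p) F) (hG : StrictlyProper G)
    (Mt Mt' : Matrix (Fin m) (Fin m) F) (Nt Nt' : Matrix (Fin m) (Fin p) F)
    (hMtStable : MatStable Ω Mt) (hNtStable : MatStable Ω Nt)
    (hMtStable' : MatStable Ω Mt') (hNtStable' : MatStable Ω Nt')
    (hMtdiag : ∀ i j, ρy i ≠ ρy j → Mt i j = 0)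
    (hMtdiag' : ∀ i j, ρy i ≠ ρy j → Mt' i j = 0)
    (hrow : ∀ i : Fin ry,
      IsUnit (Mt.submatrix (Subtype.val : {j // ρy j = i} → Fin m)
        (Subtype.val : {j // ρy j = i} → Fin m)).det ∧
      G.submatrix (Subtype.val : {j // ρy j = i} → Fin m) id =
        (Mt.submatrix (Subtype.val : {j // ρy j = i} → Fin m)
          (Subtype.val : {j // ρy j = i} → Fin m))⁻¹ *
          Nt.submatrix (Subtype.val : {j // ρy j = i} → Fin m) id ∧
      ∃ Xti : Matrix (Fin p) {j // ρy j = i} F,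
        ∃ Yti : Matrix {j // ρy j = i} {j // ρy j = i} F,
          MatStable Ω Xti ∧ MatStable Ω Yti ∧
          Nt.submatrix (Subtype.val : {j // ρy j = i} → Fin m) id * Xti +
            Mt.submatrix (Subtype.val : {j // ρy j = i} → Fin m)
              (Subtype.val : {j // ρy j = i} → Fin m) * Yti = 1)
    (hrow' : ∀ i : Fin ry,
      IsUnit (Mt'.submatrix (Subtype.val : {j // ρy j = i} → Fin m)
        (Subtype.val : {j // ρy j = i} → Fin m)).det ∧
      G.submatrix (Subtype.val : {j // ρy j = i} → Fin m) id =
        (Mt'.submatrix (Subtype.val : {j // ρy j = i} → Fin m)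
          (Subtype.val : {j // ρy j = i} → Fin m))⁻¹ *
          Nt'.submatrix (Subtype.val : {j // ρy j = i} → Fin m) id ∧
      ∃ Xti : Matrix (Fin p) {j // ρy j = i} F,
        ∃ Yti : Matrix {j // ρy j = i} {j // ρy j = i} F,
          MatStable Ω Xti ∧ MatStable Ω Yti ∧
          Nt'.submatrix (Subtype.val : {j // ρy j = i} → Fin m) id * Xti +
            Mt'.submatrix (Subtype.val : {j // ρy j = i} → Fin m)
              (Subtype.val : {j // ρy j = i} → Fin m) * Yti = 1) :
    (∀ z₀ : ℂ, z₀ ∉ Ω →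
      Matrix.rank (Matrix.of fun (i : Fin m) (jk : Fin m ⊕ Fin p) =>
        Sum.elim (fun j => evalC z₀ (Mt i j)) (fun k => evalC z₀ (Nt i k)) jk) =
      Matrix.rank (Matrix.of fun (i : Fin m) (jk : Fin m ⊕ Fin p) =>
        Sum.elim (fun j => evalC z₀ (Mt' i j)) (fun k => evalC z₀ (Nt' i k)) jk)) ∧
    ((∀ z₀ : ℂ, z₀ ∉ Ω →
        (∃ a b, ((G a b).denom.map (algebraMap ℝ ℂ)).IsRoot z₀) →
        Matrix.rank (Matrix.of fun (i : Fin m) (jk : Fin m ⊕ Fin p) =>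
          Sum.elim (fun j => evalC z₀ (Mt i j)) (fun k => evalC z₀ (Nt i k)) jk) = m) ↔
      (∀ z₀ : ℂ, z₀ ∉ Ω →
        (∃ a b, ((G a b).denom.map (algebraMap ℝ ℂ)).IsRoot z₀) →
        Matrix.rank (Matrix.of fun (i : Fin m) (jk : Fin m ⊕ Fin p) =>
          Sum.elim (fun j => evalC z₀ (Mt' i j)) (fun k => evalC z₀ (Nt' i k)) jk) = m)) :=
  rank_test_independent_of_row_factorization_general Ω m p ry ρy G Mt Mt' Nt Nt' hMtStable hNtStable
    hMtStable' hNtStable' hMtdiag hMtdiag' hrow hrow'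
end
end
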